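/- arXiv:2603.05005 — 6 statements merged into one kernel-verified Lean document; each statement's English description precedes it below -/
import Mathlib

section
/- Let z ∈ Z^m be sampled coordinatewise from the discrete Gaussian D_σ on Z with standard deviation σ, for m = ℓ·d. Then Pr[‖z‖₂ ≤ σ√(2m)] > 1 − 2^{−m/8}. -/
/-!
Chernoff bound with the weight `exp (‖z‖² / (4σ²))`. Its expectation under `D_σ` factors over the
coordinates, and per coordinate it equals `ρ_{√2 σ}(ℤ) / ρ_σ(ℤ)`, a ratio of theta sums. By Poisson
summation `ρ_s(ℤ) = √(2π) s · ρ_{1/(2π s)}(ℤ)`, and the dual sum decreases in `s`, so the ratio is at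
most `√2`. Markov's inequality then gives `Pr[‖z‖₂² > 2mσ²] ≤ (√2)^m e^{-m/2}`, which is below
`2^{-m/8}` because `log 2 < 4/5`.
-/

open scoped ENNReal
open Real

namespace Real

lemma summable_exp_neg_mul_int_sq {a : ℝ} (ha : 0 < a) :
    Summable fun n : ℤ => exp (-a * n ^ 2) :=
  (summable_pow_mul_jacobiTheta₂_term_bound 0 (div_pos ha pi_pos) 0).congr fun n => by
    field_simp
    ring_nf

lemma summable_exp_neg_int_sq_div {c : ℝ} (hc : 0 < c) :
    Summable fun n : ℤ => exp (-n ^ 2 / c) :=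
  (summable_exp_neg_mul_int_sq (inv_pos.mpr hc)).congr fun n => by
    rw [neg_div, div_eq_inv_mul, neg_mul]

lemma tsum_exp_neg_int_sq_div {c : ℝ} (hc : 0 < c) :
    ∑' n : ℤ, exp (-n ^ 2 / c) = √(π * c) * ∑' n : ℤ, exp (-(π ^ 2 * c) * n ^ 2) := by
  have hπc : 0 < π * c := mul_pos pi_pos hc
  have h := tsum_exp_neg_mul_int_sq (inv_pos.mpr hπc)
  rw [inv_rpow hπc.le, one_div, inv_inv, ← sqrt_eq_rpow] at h
  convert h using 3 with n n
  · field_simp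
  · field_simp

lemma tsum_exp_neg_int_sq_div_le {c c' : ℝ} (hc : 0 < c) (hcc' : c ≤ c') :
    ∑' n : ℤ, exp (-n ^ 2 / c') ≤ √(c' / c) * ∑' n : ℤ, exp (-n ^ 2 / c) := by
  have hc' := hc.trans_le hcc'
  have hdual : ∑' n : ℤ, exp (-(π ^ 2 * c') * n ^ 2) ≤ ∑' n : ℤ, exp (-(π ^ 2 * c) * n ^ 2) :=
    Summable.tsum_le_tsum (fun n => exp_le_exp.mpr (by gcongr))
      (summable_exp_neg_mul_int_sq (by positivity)) (summable_exp_neg_mul_int_sq (by positivity))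
  have hsqrt : √(π * c') = √(c' / c) * √(π * c) := by
    rw [← sqrt_mul (by positivity)]
    congr 1
    field_simp
  rw [tsum_exp_neg_int_sq_div hc, tsum_exp_neg_int_sq_div hc', hsqrt, mul_assoc]
  gcongr

lemma sqrt_two_pow_div_exp_lt {m : ℕ} (hm : 0 < m) :
    √2 ^ m / exp (m / 2) < 2 ^ (-(m : ℝ) / 8) := by
  have hsqrt : √2 ^ m = exp (m / 2 * log 2) := by
    rw [sqrt_eq_rpow, ← rpow_natCast, ← rpow_mul zero_le_two, rpow_def_of_pos two_pos]
    ring_nf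
  rw [hsqrt, ← exp_sub, rpow_def_of_pos two_pos, exp_lt_exp]
  have hm' : (0 : ℝ) < m := Nat.cast_pos.mpr hm
  nlinarith [log_two_lt_d9]

end Real

namespace ENNReal

lemma tsum_fin_pi_prod {α : Type*} (f : α → ℝ≥0∞) (n : ℕ) :
    ∑' z : Fin n → α, ∏ i, f (z i) = (∑' x, f x) ^ n := by
  induction n with
  | zero => simp
  | succ n ih =>
    rw [← (Fin.consEquiv fun _ => α).tsum_eq, ENNReal.tsum_prod', pow_succ']
    simp only [Fin.consEquiv_apply, Fin.prod_univ_succ, Fin.cons_zero, Fin.cons_succ,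
      ENNReal.tsum_mul_left, ih, ENNReal.tsum_mul_right]

end ENNReal

namespace PMF

variable {α : Type*} (p : PMF α) (s : Set α)

lemma toOuterMeasure_add_compl : p.toOuterMeasure s + p.toOuterMeasure sᶜ = 1 := by
  rw [toOuterMeasure_apply, toOuterMeasure_apply, ← ENNReal.tsum_add]
  simp_rw [Set.indicator_self_add_compl_apply]
  exact p.tsum_coe

lemma toOuterMeasure_mul_le_tsum_mul {f : α → ℝ≥0∞} {c : ℝ≥0∞} (h : ∀ x ∈ s, c ≤ f x) :
    p.toOuterMeasure s * c ≤ ∑' x, p x * f x := by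
  rw [toOuterMeasure_apply, ← ENNReal.tsum_mul_right]
  refine ENNReal.tsum_le_tsum fun x => ?_
  by_cases hx : x ∈ s
  · rw [Set.indicator_of_mem hx]
    exact mul_le_mul_right (h x hx) _
  · simp [hx]

lemma ofReal_one_sub_lt_toOuterMeasure {ε : ℝ} (hε1 : ε ≤ 1)
    (h : p.toOuterMeasure sᶜ < ENNReal.ofReal ε) :
    ENNReal.ofReal (1 - ε) < p.toOuterMeasure s := by
  have hε : 0 ≤ ε := by
    by_contra! hε
    simp [ENNReal.ofReal_of_nonpos hε.le] at h
  rw [ENNReal.eq_sub_of_add_eq h.ne_top (p.toOuterMeasure_add_compl s),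
    ENNReal.ofReal_sub _ hε, ENNReal.ofReal_one]
  exact (ENNReal.cancel_of_ne (ENNReal.sub_ne_top ENNReal.one_ne_top)).tsub_lt_tsub_left_of_le
    (ENNReal.ofReal_le_one.mpr hε1) h

end PMF

lemma discreteGaussian_tsum_mul_exp_sq_le {σ : ℝ} (hσ : 0 < σ) (D : PMF ℤ)
    (hD : ∀ x : ℤ, D x = ENNReal.ofReal
      (Real.exp (-(x : ℝ) ^ 2 / (2 * σ ^ 2)) /
        ∑' y : ℤ, Real.exp (-(y : ℝ) ^ 2 / (2 * σ ^ 2)))) :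
    ∑' x : ℤ, D x * ENNReal.ofReal (exp (x ^ 2 / (4 * σ ^ 2))) ≤ ENNReal.ofReal √2 := by
  set B := ∑' y : ℤ, exp (-(y : ℝ) ^ 2 / (2 * σ ^ 2))
  have hB : 0 < B := (summable_exp_neg_int_sq_div (by positivity)).tsum_pos
    (fun _ => (exp_pos _).le) 0 (exp_pos _)
  have htilt : ∀ x : ℤ, D x * ENNReal.ofReal (exp (x ^ 2 / (4 * σ ^ 2))) =
      ENNReal.ofReal (exp (-(x : ℝ) ^ 2 / (4 * σ ^ 2)) / B) := by
    intro x
    rw [hD x, ← ENNReal.ofReal_mul (by positivity), div_mul_eq_mul_div, ← exp_add]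
    congr 3
    field_simp
    ring
  have hwide : ∑' x : ℤ, exp (-(x : ℝ) ^ 2 / (4 * σ ^ 2)) ≤ √2 * B := by
    have h := tsum_exp_neg_int_sq_div_le (c := 2 * σ ^ 2) (c' := 4 * σ ^ 2) (by positivity)
      (by nlinarith [sq_nonneg σ])
    rwa [show 4 * σ ^ 2 / (2 * σ ^ 2) = 2 by field_simp; norm_num] at h
  rw [tsum_congr htilt, ← ENNReal.ofReal_tsum_of_nonneg (fun _ => by positivity)
    ((summable_exp_neg_int_sq_div (by positivity)).div_const B), tsum_div_const]
  exact ENNReal.ofReal_le_ofReal ((div_le_iff₀ hB).mpr hwide)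

lemma ofReal_exp_le_prod_of_lt_sqrt {σ : ℝ} (hσ : 0 < σ) {m : ℕ} {z : Fin m → ℤ}
    (hz : σ * √(2 * m) < √(∑ i, ((z i : ℝ)) ^ 2)) :
    ENNReal.ofReal (exp (m / 2)) ≤ ∏ i, ENNReal.ofReal (exp ((z i : ℝ) ^ 2 / (4 * σ ^ 2))) := by
  have hnorm : 2 * m * σ ^ 2 < ∑ i, ((z i : ℝ)) ^ 2 := by
    have := (lt_sqrt (by positivity)).mp hz
    rwa [mul_pow, sq_sqrt (by positivity), mul_comm] at this
  rw [← ENNReal.ofReal_prod_of_nonneg fun _ _ => (exp_pos _).le, ← exp_sum, ← Finset.sum_div]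
  refine ENNReal.ofReal_le_ofReal (exp_le_exp.mpr ?_)
  rw [le_div_iff₀ (by positivity)]
  linarith

lemma discreteGaussian_pi_tail_mul_le {σ : ℝ} (hσ : 0 < σ) {m : ℕ} (D : PMF ℤ)
    (hD : ∀ x : ℤ, D x = ENNReal.ofReal
      (Real.exp (-(x : ℝ) ^ 2 / (2 * σ ^ 2)) /
        ∑' y : ℤ, Real.exp (-(y : ℝ) ^ 2 / (2 * σ ^ 2))))
    (Dm : PMF (Fin m → ℤ)) (hDm : ∀ z : Fin m → ℤ, Dm z = ∏ i, D (z i)) :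
    Dm.toOuterMeasure {z | σ * √(2 * m) < √(∑ i, ((z i : ℝ)) ^ 2)} *
      ENNReal.ofReal (exp (m / 2)) ≤ ENNReal.ofReal √2 ^ m :=
  let g (x : ℤ) : ℝ≥0∞ := ENNReal.ofReal (exp (x ^ 2 / (4 * σ ^ 2)))
  calc _ ≤ ∑' z, Dm z * ∏ i, g (z i) :=
        Dm.toOuterMeasure_mul_le_tsum_mul _ fun _ hz => ofReal_exp_le_prod_of_lt_sqrt hσ hz
    _ = (∑' x, D x * g x) ^ m := by
        simp_rw [hDm, ← Finset.prod_mul_distrib]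
        exact ENNReal.tsum_fin_pi_prod (fun x => D x * g x) m
    _ ≤ ENNReal.ofReal √2 ^ m := by gcongr; exact discreteGaussian_tsum_mul_exp_sq_le hσ D hD

theorem stmt4_general (σ : ℝ) (hσ : 0 < σ) (m : ℕ)
    (D : PMF ℤ)
    (hD : ∀ x : ℤ, D x = ENNReal.ofReal
      (Real.exp (-(x : ℝ) ^ 2 / (2 * σ ^ 2)) /
        ∑' y : ℤ, Real.exp (-(y : ℝ) ^ 2 / (2 * σ ^ 2))))
    (Dm : PMF (Fin m → ℤ))
    (hDm : ∀ z : Fin m → ℤ, Dm z = ∏ i, D (z i)) :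
    Dm.toOuterMeasure
        {z : Fin m → ℤ | Real.sqrt (∑ i, ((z i : ℝ)) ^ 2) ≤ σ * Real.sqrt (2 * m)} >
      ENNReal.ofReal (1 - 2 ^ (-(m : ℝ) / 8)) := by
  set S := {z : Fin m → ℤ | Real.sqrt (∑ i, ((z i : ℝ)) ^ 2) ≤ σ * Real.sqrt (2 * m)}
  have hε : (2 : ℝ) ^ (-(m : ℝ) / 8) ≤ 1 :=
    rpow_le_one_of_one_le_of_nonpos one_le_two
      (div_nonpos_of_nonpos_of_nonneg (neg_nonpos.mpr m.cast_nonneg) (by norm_num))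
  refine Dm.ofReal_one_sub_lt_toOuterMeasure S hε ?_
  obtain rfl | hm := m.eq_zero_or_pos
  · have hS : Sᶜ = ∅ := by simp [S]
    simp [hS]
  have hexp_ne_zero : ENNReal.ofReal (exp (m / 2)) ≠ 0 := by simp [exp_pos]
  calc Dm.toOuterMeasure Sᶜ ≤ ENNReal.ofReal √2 ^ m / ENNReal.ofReal (exp (m / 2)) := by
        refine (ENNReal.le_div_iff_mul_le (.inl hexp_ne_zero) (.inl ENNReal.ofReal_ne_top)).mpr ?_
        simpa [S, Set.compl_ofPred] using discreteGaussian_pi_tail_mul_le hσ D hD Dm hDm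
    _ = ENNReal.ofReal (√2 ^ m / exp (m / 2)) := by
        rw [ENNReal.ofReal_div_of_pos (exp_pos _), ENNReal.ofReal_pow (sqrt_nonneg 2)]
    _ < ENNReal.ofReal (2 ^ (-(m : ℝ) / 8)) :=
        (ENNReal.ofReal_lt_ofReal_iff (by positivity)).mpr (sqrt_two_pow_div_exp_lt hm)

/-- Banaszczyk-type tail bound: if `z ∈ ℤ^m`, `m = ℓ·d`, is sampled
coordinatewise from the discrete Gaussian `D_σ` on `ℤ`, then
`Pr[‖z‖₂ ≤ σ√(2m)] > 1 − 2^{−m/8}`. -/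
theorem stmt4 (σ : ℝ) (hσ : 0 < σ) (ℓ d m : ℕ) (hm : m = ℓ * d) (hℓ : 1 < ℓ) (hd : 1 < d)
    (D : PMF ℤ)
    (hD : ∀ x : ℤ, D x = ENNReal.ofReal
      (Real.exp (-(x : ℝ) ^ 2 / (2 * σ ^ 2)) /
        ∑' y : ℤ, Real.exp (-(y : ℝ) ^ 2 / (2 * σ ^ 2))))
    (Dm : PMF (Fin m → ℤ))
    (hDm : ∀ z : Fin m → ℤ, Dm z = ∏ i, D (z i)) :
    Dm.toOuterMeasure
        {z : Fin m → ℤ | Real.sqrt (∑ i, ((z i : ℝ)) ^ 2) ≤ σ * Real.sqrt (2 * m)} >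
      ENNReal.ofReal (1 - 2 ^ (-(m : ℝ) / 8)) :=
  stmt4_general σ hσ m D hD Dm hDm
end

section
/- Let w ∈ Z_q^m be a nonzero vector and y ∈ Z_q^n arbitrary. If R is an n×m matrix with i.i.d. entries from the centered binomial distribution Bin_1 on {−1,0,1} (each ±1 with probability 1/4, 0 with probability 1/2), then Pr[‖Rw + y‖_∞ < (1/2)‖w‖_∞] ≤ 2^{−n}. -/
open scoped ENNReal

private lemma tsum_pi_fin {α : Type*} :
    ∀ (k : ℕ) (F : Fin k → α → ℝ≥0∞),
      (∑' f : Fin k → α, ∏ i, F i (f i)) = ∏ i, ∑' a, F i a := by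
  intro k
  induction k with
  | zero =>
      intro F
      simp only [Finset.univ_eq_empty, Finset.prod_empty]
      rw [tsum_eq_single (fun i => i.elim0)]
      intro f g
      exact absurd (funext fun i => i.elim0) g
  | succ k ih =>
      intro F
      rw [← Equiv.tsum_eq (Fin.consEquiv (fun _ : Fin (k + 1) => α))
        (fun f => ∏ i, F i (f i))]
      rw [ENNReal.tsum_prod']
      have key : ∀ (x : α) (r : Fin k → α),
          (∏ i, F i ((Fin.consEquiv fun _ : Fin (k + 1) => α) (x, r) i))
            = F 0 x * ∏ i : Fin k, F i.succ (r i) := by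
        intro x r
        rw [Fin.prod_univ_succ]
        simp
      calc (∑' (x : α) (r : Fin k → α),
            ∏ i, F i ((Fin.consEquiv fun _ : Fin (k + 1) => α) (x, r) i))
          = ∑' (x : α), F 0 x * ∑' r : Fin k → α, ∏ i : Fin k, F i.succ (r i) := by
            congr 1; funext x
            simp_rw [key]
            rw [ENNReal.tsum_mul_left]
        _ = (∑' x : α, F 0 x) * ∑' r : Fin k → α, ∏ i : Fin k, F i.succ (r i) :=
            ENNReal.tsum_mul_right
        _ = ∏ i, ∑' a, F i a := by
            rw [ih (fun i a => F i.succ a), Fin.prod_univ_succ]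

private lemma tsum_pi_prod {ι α : Type*} [Fintype ι] (F : ι → α → ℝ≥0∞) :
    (∑' f : ι → α, ∏ i, F i (f i)) = ∏ i, ∑' a, F i a := by
  classical
  let e := Fintype.equivFin ι
  rw [← Equiv.tsum_eq ((Equiv.arrowCongr e (Equiv.refl α)).symm)
    (fun f : ι → α => ∏ i, F i (f i))]
  have key : ∀ g : Fin (Fintype.card ι) → α,
      (∏ i, F i (((Equiv.arrowCongr e (Equiv.refl α)).symm g) i))
        = ∏ j, F (e.symm j) (g j) := by
    intro g
    rw [← Equiv.prod_comp e (fun j => F (e.symm j) (g j))]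
    simp [Equiv.arrowCongr]
  simp_rw [key]
  rw [tsum_pi_fin _ (fun j a => F (e.symm j) a)]
  exact Equiv.prod_comp e.symm (fun i => ∑' a, F i a)

/-- for a nonzero `w ∈ Z_q^m`, arbitrary `y ∈ Z_q^n`, and `R` an `n×m`
matrix with i.i.d. entries from the centered binomial distribution `Bin₁` on `{−1,0,1}`
(±1 each with probability 1/4, 0 with probability 1/2),
`Pr[‖Rw + y‖_∞ < (1/2)‖w‖_∞] ≤ 2^{−n}`, where `‖·‖_∞` is the maximum absolute value of
the centered representatives. -/
theorem stmt6 (q n m : ℕ) [NeZero q] (hn : 0 < n) (hm : 0 < m)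
    (w : Fin m → ZMod q) (hw : w ≠ 0) (y : Fin n → ZMod q)
    (b : ℤ → ℝ≥0∞)
    (hb1 : b 1 = 1 / 4) (hbneg : b (-1) = 1 / 4) (hb0 : b 0 = 1 / 2)
    (hbelse : ∀ x : ℤ, x ≠ 1 → x ≠ -1 → x ≠ 0 → b x = 0)
    (Rpmf : PMF (Fin n → Fin m → ℤ))
    (hR : ∀ A : Fin n → Fin m → ℤ, Rpmf A = ∏ i, ∏ j, b (A i j)) :
    Rpmf.toOuterMeasure
        {A : Fin n → Fin m → ℤ |
          2 * (Finset.univ.sup fun i : Fin n =>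
              ((∑ j, (A i j : ZMod q) * w j) + y i).valMinAbs.natAbs) <
            Finset.univ.sup fun j : Fin m => (w j).valMinAbs.natAbs} ≤
      (2 : ℝ≥0∞)⁻¹ ^ n := by
  classical
  have hb1' : b 1 = 4⁻¹ := by rw [hb1, one_div]
  have hbneg' : b (-1) = 4⁻¹ := by rw [hbneg, one_div]
  have hb0' : b 0 = 2⁻¹ := by rw [hb0, one_div]
  have h44 : (4 : ℝ≥0∞)⁻¹ + 4⁻¹ = 2⁻¹ := by
    rw [← ENNReal.coe_ofNat, ← ENNReal.coe_ofNat, ← ENNReal.coe_inv (by norm_num),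
      ← ENNReal.coe_inv (by norm_num), ← ENNReal.coe_add, ENNReal.coe_inj,
      NNReal.eq_iff]
    norm_num
  have h424 : (4 : ℝ≥0∞)⁻¹ + (2⁻¹ + 4⁻¹) = 1 := by
    rw [← ENNReal.coe_ofNat, ← ENNReal.coe_ofNat, ← ENNReal.coe_inv (by norm_num),
      ← ENNReal.coe_inv (by norm_num), ← ENNReal.coe_add, ← ENNReal.coe_add,
      ← ENNReal.coe_one, ENNReal.coe_inj, NNReal.eq_iff]
    norm_num
  have hmne : Nonempty (Fin m) := ⟨⟨0, hm⟩⟩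
  have hnne : Nonempty (Fin n) := ⟨⟨0, hn⟩⟩
  set W : ℕ := Finset.univ.sup fun j : Fin m => (w j).valMinAbs.natAbs with hWdef
  -- W > 0
  have hW0 : 0 < W := by
    obtain ⟨j, hj⟩ : ∃ j, w j ≠ 0 := by
      by_contra h
      push_neg at h
      exact hw (funext h)
    have h2 : 0 < (w j).valMinAbs.natAbs := by
      rw [Int.natAbs_pos, Ne, ZMod.valMinAbs_eq_zero]
      exact hj
    exact lt_of_lt_of_le h2 (Finset.le_sup (f := fun j : Fin m => (w j).valMinAbs.natAbs) (Finset.mem_univ j))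
  -- index achieving the sup
  obtain ⟨j0, -, hj0⟩ := Finset.exists_mem_eq_sup Finset.univ
    (Finset.univ_nonempty (α := Fin m)) (fun j : Fin m => (w j).valMinAbs.natAbs)
  -- key arithmetic lemma
  have klemma : ∀ (z c : ZMod q), c.valMinAbs.natAbs = W →
      2 * z.valMinAbs.natAbs < W → 2 * (z + c).valMinAbs.natAbs < W → False := by
    intro z c hc h1 h2
    have h3 := ZMod.natAbs_valMinAbs_add_le (z + c) (-z)
    have h4 : z + c + -z = c := by ring
    rw [h4] at h3
    have h5 : ((z + c).valMinAbs + (-z).valMinAbs).natAbs ≤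
        (z + c).valMinAbs.natAbs + (-z).valMinAbs.natAbs := Int.natAbs_add_le _ _
    rw [ZMod.natAbs_valMinAbs_neg] at h5
    omega
  -- bound on the single-entry conditional sum
  have inner : ∀ t : ZMod q,
      (∑' x : ℤ, b x *
        (if 2 * ((x : ZMod q) * w j0 + t).valMinAbs.natAbs < W then (1 : ℝ≥0∞) else 0))
        ≤ 2⁻¹ := by
    intro t
    rw [tsum_eq_sum (s := ({-1, 0, 1} : Finset ℤ)) (by
      intro x hx
      simp only [Finset.mem_insert, Finset.mem_singleton] at hx
      push_neg at hx
      rw [hbelse x hx.2.2 hx.1 hx.2.1, zero_mul])]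
    rw [show ({-1, 0, 1} : Finset ℤ) = insert (-1) (insert 0 {1}) from rfl,
      Finset.sum_insert (by decide), Finset.sum_insert (by decide),
      Finset.sum_singleton]
    have e0 : ((0 : ℤ) : ZMod q) * w j0 + t = t := by push_cast; ring
    have e1 : ((1 : ℤ) : ZMod q) * w j0 + t = t + w j0 := by push_cast; ring
    have en : (((-1 : ℤ)) : ZMod q) * w j0 + t = t + -(w j0) := by push_cast; ring
    rw [e0, e1, en, hb1', hbneg', hb0']
    by_cases h0 : 2 * t.valMinAbs.natAbs < W
    · have hp : ¬ 2 * (t + w j0).valMinAbs.natAbs < W := fun hcon =>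
        klemma t (w j0) hj0.symm h0 hcon
      have hq : ¬ 2 * (t + -(w j0)).valMinAbs.natAbs < W := fun hcon =>
        klemma t (-(w j0)) (by rw [ZMod.natAbs_valMinAbs_neg]; exact hj0.symm) h0 hcon
      rw [if_pos h0, if_neg hp, if_neg hq]
      simp
    · rw [if_neg h0, mul_zero, zero_add]
      calc (4 : ℝ≥0∞)⁻¹ * (if 2 * (t + -(w j0)).valMinAbs.natAbs < W then (1:ℝ≥0∞) else 0)
            + 4⁻¹ * (if 2 * (t + w j0).valMinAbs.natAbs < W then (1:ℝ≥0∞) else 0)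
          ≤ 4⁻¹ * 1 + 4⁻¹ * 1 := by
            gcongr <;> split <;> norm_num
        _ = 2⁻¹ := by simpa using h44
  -- per-row bound
  have row : ∀ c : ZMod q,
      (∑' a : Fin m → ℤ,
        (if 2 * ((∑ j, (a j : ZMod q) * w j) + c).valMinAbs.natAbs < W then (1 : ℝ≥0∞)
          else 0) * ∏ j, b (a j)) ≤ 2⁻¹ := by
    intro c
    set F : (Fin m → ℤ) → ℝ≥0∞ := fun a =>
      (if 2 * ((∑ j, (a j : ZMod q) * w j) + c).valMinAbs.natAbs < W then (1 : ℝ≥0∞)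
        else 0) * ∏ j, b (a j) with hF
    rw [← Equiv.tsum_eq (Equiv.funSplitAt j0 ℤ).symm F, ENNReal.tsum_prod',
      ENNReal.tsum_comm]
    have hFsplit : ∀ (x : ℤ) (r : { j // j ≠ j0 } → ℤ),
        F ((Equiv.funSplitAt j0 ℤ).symm (x, r)) =
          (∏ j : { j // j ≠ j0 }, b (r j)) *
            (b x * (if 2 * ((x : ZMod q) * w j0 +
                ((∑ j : { j // j ≠ j0 }, (r j : ZMod q) * w j) + c)).valMinAbs.natAbs < W
              then (1 : ℝ≥0∞) else 0)) := by
      intro x r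
      set a : Fin m → ℤ := (Equiv.funSplitAt j0 ℤ).symm (x, r) with haa
      have ha : ∀ j : Fin m, a j = if h : j = j0 then x else r ⟨j, h⟩ := by
        intro j
        rw [haa, Equiv.funSplitAt_symm_apply]
      have ha0 : a j0 = x := by rw [ha j0, dif_pos rfl]
      have hane : ∀ j : { j // j ≠ j0 }, a j = r j := by
        intro j
        rw [ha j, dif_neg j.2]
      have hsum : (∑ j, ((a j : ZMod q)) * w j) =
          (x : ZMod q) * w j0 + ∑ j : { j // j ≠ j0 }, (r j : ZMod q) * w j := by
        rw [← Finset.add_sum_erase Finset.univ (fun j => ((a j : ZMod q)) * w j)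
          (Finset.mem_univ j0), ha0]
        congr 1
        rw [Finset.sum_subtype (p := fun j => j ≠ j0) (Finset.univ.erase j0)
          (fun j => by simp [Finset.mem_erase]) (fun j => ((a j : ZMod q)) * w j)]
        exact Finset.sum_congr rfl fun j _ => by rw [hane j]
      have hprod : (∏ j, b (a j)) = b x * ∏ j : { j // j ≠ j0 }, b (r j) := by
        rw [← Finset.mul_prod_erase Finset.univ (fun j => b (a j))
          (Finset.mem_univ j0), ha0]
        congr 1
        rw [Finset.prod_subtype (p := fun j => j ≠ j0) (Finset.univ.erase j0)
          (fun j => by simp [Finset.mem_erase]) (fun j => b (a j))]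
        exact Finset.prod_congr rfl fun j _ => by rw [hane j]
      rw [hF]
      simp only [← haa]
      rw [hsum, hprod, add_assoc]
      ring
    calc (∑' (r : { j // j ≠ j0 } → ℤ) (x : ℤ), F ((Equiv.funSplitAt j0 ℤ).symm (x, r)))
        = ∑' (r : { j // j ≠ j0 } → ℤ), (∏ j : { j // j ≠ j0 }, b (r j)) *
            ∑' x : ℤ, b x * (if 2 * ((x : ZMod q) * w j0 +
                ((∑ j : { j // j ≠ j0 }, (r j : ZMod q) * w j) + c)).valMinAbs.natAbs < W
              then (1 : ℝ≥0∞) else 0) := by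
          congr 1; funext r
          simp_rw [hFsplit]
          rw [ENNReal.tsum_mul_left]
      _ ≤ ∑' (r : { j // j ≠ j0 } → ℤ), (∏ j : { j // j ≠ j0 }, b (r j)) * 2⁻¹ := by
          apply ENNReal.tsum_le_tsum
          intro r
          exact mul_le_mul_right (inner _) _
      _ = (∑' (r : { j // j ≠ j0 } → ℤ), ∏ j : { j // j ≠ j0 }, b (r j)) * 2⁻¹ :=
          ENNReal.tsum_mul_right
      _ ≤ 2⁻¹ := by
          rw [tsum_pi_prod (fun (_ : { j // j ≠ j0 }) (x : ℤ) => b x)]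
          have hb : (∑' x : ℤ, b x) = 1 := by
            rw [tsum_eq_sum (s := ({-1, 0, 1} : Finset ℤ)) (by
              intro x hx
              simp only [Finset.mem_insert, Finset.mem_singleton] at hx
              push_neg at hx
              exact hbelse x hx.2.2 hx.1 hx.2.1)]
            rw [show ({-1, 0, 1} : Finset ℤ) = insert (-1) (insert 0 {1}) from rfl,
              Finset.sum_insert (by decide), Finset.sum_insert (by decide),
              Finset.sum_singleton, hb1', hbneg', hb0', h424]
          rw [hb]
          simp
  -- now the main computation
  rw [PMF.toOuterMeasure_apply]
  set S : Set (Fin n → Fin m → ℤ) :=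
    {A : Fin n → Fin m → ℤ |
      2 * (Finset.univ.sup fun i : Fin n =>
          ((∑ j, (A i j : ZMod q) * w j) + y i).valMinAbs.natAbs) < W} with hS
  have hmem : ∀ A : Fin n → Fin m → ℤ, A ∈ S ↔ ∀ i : Fin n,
      2 * ((∑ j, (A i j : ZMod q) * w j) + y i).valMinAbs.natAbs < W := by
    intro A
    constructor
    · intro hA i
      have : ((∑ j, (A i j : ZMod q) * w j) + y i).valMinAbs.natAbs ≤
          Finset.univ.sup fun i : Fin n =>
            ((∑ j, (A i j : ZMod q) * w j) + y i).valMinAbs.natAbs :=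
        Finset.le_sup (f := fun i : Fin n =>
          ((∑ j, (A i j : ZMod q) * w j) + y i).valMinAbs.natAbs) (Finset.mem_univ i)
      have hA' : 2 * (Finset.univ.sup fun i : Fin n =>
          ((∑ j, (A i j : ZMod q) * w j) + y i).valMinAbs.natAbs) < W := hA
      omega
    · intro h
      obtain ⟨i1, -, hi1⟩ := Finset.exists_mem_eq_sup Finset.univ
        (Finset.univ_nonempty (α := Fin n))
        (fun i : Fin n => ((∑ j, (A i j : ZMod q) * w j) + y i).valMinAbs.natAbs)
      show 2 * (Finset.univ.sup fun i : Fin n =>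
          ((∑ j, (A i j : ZMod q) * w j) + y i).valMinAbs.natAbs) < W
      rw [hi1]
      exact h i1
  set G : Fin n → (Fin m → ℤ) → ℝ≥0∞ := fun i a =>
    (if 2 * ((∑ j, (a j : ZMod q) * w j) + y i).valMinAbs.natAbs < W then (1 : ℝ≥0∞)
      else 0) * ∏ j, b (a j) with hG
  have hind : ∀ A : Fin n → Fin m → ℤ, S.indicator (⇑Rpmf) A = ∏ i, G i (A i) := by
    intro A
    rw [Set.indicator_apply, hG]
    simp only
    rw [Finset.prod_mul_distrib, Finset.prod_boole, ← hR]
    by_cases hA : A ∈ S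
    · rw [if_pos hA, if_pos (fun i _ => (hmem A).mp hA i), one_mul]
    · rw [if_neg hA, if_neg (fun hall => hA ((hmem A).mpr fun i => hall i
        (Finset.mem_univ i))), zero_mul]
  calc (∑' A : Fin n → Fin m → ℤ, S.indicator (⇑Rpmf) A)
      = ∑' A : Fin n → Fin m → ℤ, ∏ i, G i (A i) := tsum_congr hind
    _ = ∏ i : Fin n, ∑' a : Fin m → ℤ, G i a := tsum_pi_prod G
    _ ≤ ∏ _i : Fin n, (2 : ℝ≥0∞)⁻¹ :=
        Finset.prod_le_prod' fun i _ => row (y i)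
    _ = (2 : ℝ≥0∞)⁻¹ ^ n := by rw [Finset.prod_const, Finset.card_univ, Fintype.card_fin]
end

section
/- (Unruh's two-projection bound) Let C be a finite set, |ψ⟩ a unit vector in a finite-dimensional Hilbert space H, and for each c ∈ C let W_c be a unitary on H and P_c an orthogonal projector on H. Define ε = E_{c←C} ‖P_c W_c |ψ⟩‖² and δ = E_{c₁,c₂←C} ‖P_{c₂} W_{c₂} W_{c₁}† P_{c₁} W_{c₁} |ψ⟩‖². Then δ ≥ ε³. -/
/-!
Conjugating by the unitaries, `Q_c = W_c† P_c W_c` are orthogonal projections with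
`‖P_c W_c ψ‖ = ‖Q_c ψ‖` and `‖P_{c₂} W_{c₂} W_{c₁}† P_{c₁} W_{c₁} ψ‖ = ‖Q_{c₂} Q_{c₁} ψ‖`.
Put `S = ∑ ‖Q_c ψ‖²` and `s = ∑ Q_c ψ`. Then `S = re ⟪s, ψ⟫ ≤ ‖s‖`, while
`‖s‖² = ∑ re ⟪Q_c ψ, Q_c s⟫ ≤ √S · √(∑ ‖Q_c s‖²)` and `‖Q_c s‖² ≤ |C| ∑_{c'} ‖Q_c Q_{c'} ψ‖²`.
Together `S⁴ ≤ |C| · S · ∑ ‖Q_{c₂} Q_{c₁} ψ‖²`, which after normalisation is `ε³ ≤ δ`.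
-/

open ContinuousLinearMap
open scoped InnerProductSpace

theorem IsStarProjection.star_mul_mul_of_mul_star_eq_one {R : Type*} [Monoid R] [StarMul R]
    {p u : R} (hp : IsStarProjection p) (hu : u * star u = 1) :
    IsStarProjection (star u * p * u) where
  isIdempotentElem := by
    calc star u * p * u * (star u * p * u) = star u * p * (u * star u) * p * u := by
          simp only [mul_assoc]
      _ = star u * p * u := by rw [hu, mul_one, mul_assoc (star u) p p, hp.isIdempotentElem.eq]
  isSelfAdjoint := hp.isSelfAdjoint.conjugate' u

theorem norm_sum_sq_le_card_mul_sum_norm_sq {ι E : Type*} [SeminormedAddCommGroup E]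
    (s : Finset ι) (v : ι → E) : ‖∑ i ∈ s, v i‖ ^ 2 ≤ s.card * ∑ i ∈ s, ‖v i‖ ^ 2 :=
  (pow_le_pow_left₀ (norm_nonneg _) (norm_sum_le s v) 2).trans sq_sum_le_card_mul_sum_sq

section Projections

variable {𝕜 E : Type*} [RCLike 𝕜] [NormedAddCommGroup E] [InnerProductSpace 𝕜 E]
  [CompleteSpace E]

theorem IsStarProjection.inner_apply_left_eq_inner_apply_apply {Q : E →L[𝕜] E}
    (hQ : IsStarProjection Q) (x y : E) : ⟪Q x, y⟫_𝕜 = ⟪Q x, Q y⟫_𝕜 := by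
  have hsym := hQ.isSymmetricProjection.isSymmetric
  have hidem : Q (Q x) = Q x := congrArg (· x) hQ.isIdempotentElem
  calc ⟪Q x, y⟫_𝕜 = ⟪Q (Q x), y⟫_𝕜 := by rw [hidem]
    _ = ⟪Q x, Q y⟫_𝕜 := hsym (Q x) y

theorem IsStarProjection.re_inner_apply_self {Q : E →L[𝕜] E} (hQ : IsStarProjection Q) (x : E) :
    RCLike.re ⟪Q x, x⟫_𝕜 = ‖Q x‖ ^ 2 := by
  rw [hQ.inner_apply_left_eq_inner_apply_apply, inner_self_eq_norm_sq]

variable {ι : Type*} [Fintype ι] {Q : ι → E →L[𝕜] E}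

theorem sum_norm_sq_apply_le_norm_mul_norm_sum (hQ : ∀ i, IsStarProjection (Q i)) (x : E) :
    ∑ i, ‖Q i x‖ ^ 2 ≤ ‖x‖ * ‖∑ i, Q i x‖ :=
  calc ∑ i, ‖Q i x‖ ^ 2 = RCLike.re ⟪∑ i, Q i x, x⟫_𝕜 := by
        simp only [sum_inner, map_sum, (hQ _).re_inner_apply_self]
    _ ≤ ‖x‖ * ‖∑ i, Q i x‖ := (re_inner_le_norm _ _).trans_eq (mul_comm _ _)

theorem norm_sum_apply_sq_le (hQ : ∀ i, IsStarProjection (Q i)) (x : E) :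
    ‖∑ i, Q i x‖ ^ 2 ≤ ∑ i, ‖Q i x‖ * ‖Q i (∑ j, Q j x)‖ := by
  set s := ∑ j, Q j x
  calc ‖s‖ ^ 2 = RCLike.re ⟪∑ i, Q i x, s⟫_𝕜 := (inner_self_eq_norm_sq s).symm
    _ = ∑ i, RCLike.re ⟪Q i x, Q i s⟫_𝕜 := by
        rw [sum_inner, map_sum]
        exact Finset.sum_congr rfl fun i _ => by
          rw [(hQ i).inner_apply_left_eq_inner_apply_apply]
    _ ≤ ∑ i, ‖Q i x‖ * ‖Q i s‖ := Finset.sum_le_sum fun i _ => re_inner_le_norm _ _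

theorem sum_norm_sq_apply_pow_three_le (hQ : ∀ i, IsStarProjection (Q i)) (x : E) :
    (∑ i, ‖Q i x‖ ^ 2) ^ 3 ≤ Fintype.card ι * ‖x‖ ^ 4 * ∑ i, ∑ j, ‖Q j (Q i x)‖ ^ 2 := by
  set S := ∑ i, ‖Q i x‖ ^ 2
  set D := ∑ i, ∑ j, ‖Q j (Q i x)‖ ^ 2
  have hS : 0 ≤ S := by positivity
  have key : S ^ 4 ≤ ‖x‖ ^ 4 * (S * (Fintype.card ι * D)) :=
    calc S ^ 4 ≤ (‖x‖ * ‖∑ i, Q i x‖) ^ 4 :=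
          pow_le_pow_left₀ hS (sum_norm_sq_apply_le_norm_mul_norm_sum hQ x) 4
      _ = ‖x‖ ^ 4 * (‖∑ i, Q i x‖ ^ 2) ^ 2 := by ring
      _ ≤ ‖x‖ ^ 4 * (∑ i, ‖Q i x‖ * ‖Q i (∑ j, Q j x)‖) ^ 2 := by
          gcongr; exact norm_sum_apply_sq_le hQ x
      _ ≤ ‖x‖ ^ 4 * (S * ∑ i, ‖Q i (∑ j, Q j x)‖ ^ 2) := by
          gcongr; exact Finset.sum_mul_sq_le_sq_mul_sq _ _ _
      _ ≤ ‖x‖ ^ 4 * (S * (Fintype.card ι * D)) := by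
          gcongr
          calc ∑ i, ‖Q i (∑ j, Q j x)‖ ^ 2
              ≤ ∑ i, Fintype.card ι * ∑ j, ‖Q i (Q j x)‖ ^ 2 := Finset.sum_le_sum fun i _ => by
                rw [map_sum]; exact norm_sum_sq_le_card_mul_sum_norm_sq _ _
            _ = Fintype.card ι * D := by rw [← Finset.mul_sum, Finset.sum_comm]
  rcases hS.eq_or_lt with hS0 | hSpos
  · rw [← hS0, zero_pow three_ne_zero]; positivity
  · nlinarith [pow_pos hSpos 3]

end Projections

theorem stmt11_general {H : Type*} [NormedAddCommGroup H] [InnerProductSpace ℂ H]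
    [FiniteDimensional ℂ H] {C : Type*} [Fintype C]
    (ψ : H) (hψ : ‖ψ‖ = 1)
    (W P : C → H →L[ℂ] H)
    (hWr : ∀ c, (W c).comp (adjoint (W c)) = ContinuousLinearMap.id ℂ H)
    (hPidem : ∀ c, (P c).comp (P c) = P c)
    (hPsa : ∀ c, IsSelfAdjoint (P c))
    (ε δ : ℝ)
    (hε : ε = (Fintype.card C : ℝ)⁻¹ * ∑ c, ‖P c (W c ψ)‖ ^ 2)
    (hδ : δ = ((Fintype.card C : ℝ) ^ 2)⁻¹ * ∑ c₁, ∑ c₂,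
      ‖P c₂ (W c₂ (adjoint (W c₁) (P c₁ (W c₁ ψ))))‖ ^ 2) :
    ε ^ 3 ≤ δ := by
  set Q : C → H →L[ℂ] H := fun c => star (W c) * P c * W c
  have hQ c : IsStarProjection (Q c) :=
    IsStarProjection.star_mul_mul_of_mul_star_eq_one ⟨hPidem c, hPsa c⟩
      (by rw [star_eq_adjoint]; exact hWr c)
  have hW c (y : H) : ‖adjoint (W c) y‖ = ‖y‖ :=
    (norm_map_iff_adjoint_comp_self _).mpr (by rw [adjoint_adjoint]; exact hWr c) y
  have hε' : ε = (Fintype.card C : ℝ)⁻¹ * ∑ c, ‖Q c ψ‖ ^ 2 := by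
    simp [hε, Q, star_eq_adjoint, hW]
  have hδ' : δ = ((Fintype.card C : ℝ) ^ 2)⁻¹ * ∑ c₁, ∑ c₂, ‖Q c₂ (Q c₁ ψ)‖ ^ 2 := by
    simp [hδ, Q, star_eq_adjoint, hW]
  have key := sum_norm_sq_apply_pow_three_le hQ ψ
  rw [hψ, one_pow, mul_one] at key
  rcases eq_or_ne (Fintype.card C : ℝ) 0 with hn | hn
  · simp [hε', hδ', hn]
  · rw [hε', hδ', mul_pow, inv_pow]
    calc ((Fintype.card C : ℝ) ^ 3)⁻¹ * (∑ c, ‖Q c ψ‖ ^ 2) ^ 3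
        ≤ ((Fintype.card C : ℝ) ^ 3)⁻¹ * (Fintype.card C * ∑ c₁, ∑ c₂, ‖Q c₂ (Q c₁ ψ)‖ ^ 2) := by
          gcongr
      _ = _ := by field_simp

/-- Unruh's two-projection bound: for a finite challenge set `C`, a unit
vector `ψ` in a finite-dimensional complex Hilbert space, unitaries `W_c` and orthogonal
projectors `P_c`, with
`ε = E_c ‖P_c W_c ψ‖²` and `δ = E_{c₁,c₂} ‖P_{c₂} W_{c₂} W_{c₁}† P_{c₁} W_{c₁} ψ‖²`,
we have `δ ≥ ε³`. -/
theorem stmt11 {H : Type*} [NormedAddCommGroup H] [InnerProductSpace ℂ H]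
    [FiniteDimensional ℂ H] {C : Type*} [Fintype C] [Nonempty C]
    (ψ : H) (hψ : ‖ψ‖ = 1)
    (W P : C → H →L[ℂ] H)
    (hWl : ∀ c, (adjoint (W c)).comp (W c) = ContinuousLinearMap.id ℂ H)
    (hWr : ∀ c, (W c).comp (adjoint (W c)) = ContinuousLinearMap.id ℂ H)
    (hPidem : ∀ c, (P c).comp (P c) = P c)
    (hPsa : ∀ c, IsSelfAdjoint (P c))
    (ε δ : ℝ)
    (hε : ε = (Fintype.card C : ℝ)⁻¹ * ∑ c, ‖P c (W c ψ)‖ ^ 2)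
    (hδ : δ = ((Fintype.card C : ℝ) ^ 2)⁻¹ * ∑ c₁, ∑ c₂,
      ‖P c₂ (W c₂ (adjoint (W c₁) (P c₁ (W c₁ ψ))))‖ ^ 2) :
    ε ^ 3 ≤ δ :=
  stmt11_general ψ hψ W P hWr hPidem hPsa ε δ hε hδ
end

section
/- (General forking lemma bound) Let A be a randomized algorithm taking input x and q values h_1,...,h_q from a set H of size |H| = h ≥ 2, outputting (J, σ) with J ∈ {0,...,q}. Let acc be the probability that J ≥ 1. Let F_A be the forking algorithm that runs A once with random coins and fresh h_i's obtaining (I, σ); if I = 0 outputs failure; otherwise re-runs A with the same coins and the same h_1,...,h_{I−1} but fresh h'_I,...,h'_q obtaining (I', σ'), succeeding if I = I' and h_I ≠ h'_I. Let frk be the success probability of F_A. Then frk ≥ acc·(acc/q − 1/h), equivalently acc ≤ q/h + √(q·frk). -/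
/-!
Fix the input and the coins, so that `A` becomes a map `g` from answer vectors `hs ∈ H^q` to
`Option (Fin q)`; write `N = |H|^q` and `c_i = #{hs | g hs = some i}`. Splitting `hs` at `i` into
the prefix `hs_{<i}` and the suffix `hs_{≥i}`, Cauchy–Schwarz over prefixes shows that at least
`c_i²` of the `N²` pairs `(hs, hs')` let both `hs` and `(hs_{<i}, hs'_{≥i})` output `i`, and at most
`c_i N / |H|` of them have `hs i = hs' i`. Summing over `i` with Cauchy–Schwarz once more gives
`acc² ≤ q·frk + (q/|H|)·acc` for the conditional probabilities; Jensen's inequality shows that this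
quadratic inequality survives averaging over inputs and coins, and solving it gives both bounds.
-/

open Finset
open scoped ENNReal

theorem ENNReal.two_mul_le_add_sq (a b : ℝ≥0∞) : 2 * a * b ≤ a ^ 2 + b ^ 2 := by
  induction a using ENNReal.recTopCoe with
  | top => simp
  | coe a =>
    induction b using ENNReal.recTopCoe with
    | top => simp
    | coe b => exact_mod_cast _root_.two_mul_le_add_sq a b

namespace PMF

variable {α β γ : Type*}

theorem toOuterMeasure_apply_le_one (p : PMF α) (s : Set α) : p.toOuterMeasure s ≤ 1 :=
  (MeasureTheory.measure_mono (Set.subset_univ s)).trans_eq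
    ((p.toOuterMeasure_apply_eq_one_iff _).2 (Set.subset_univ _))

theorem sq_tsum_mul_le_tsum_mul_sq (p : PMF α) (f : α → ℝ≥0∞) (hf : ∑' a, p a * f a ≠ ∞) :
    (∑' a, p a * f a) ^ 2 ≤ ∑' a, p a * f a ^ 2 := by
  set m := ∑' a, p a * f a
  have hm : m ^ 2 + m ^ 2 ≤ ∑' a, p a * f a ^ 2 + m ^ 2 :=
    calc m ^ 2 + m ^ 2 = ∑' a, p a * (2 * m * f a) := by
          simp only [mul_left_comm (p _), ENNReal.tsum_mul_left]
          ring
      _ ≤ ∑' a, p a * (f a ^ 2 + m ^ 2) := ENNReal.tsum_le_tsum fun a =>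
          mul_le_mul_right ((ENNReal.two_mul_le_add_sq m (f a)).trans_eq (add_comm _ _)) _
      _ = ∑' a, p a * f a ^ 2 + m ^ 2 := by
          simp only [mul_add, ENNReal.tsum_add, ENNReal.tsum_mul_right, p.tsum_coe, one_mul]
  exact (ENNReal.add_le_add_iff_right (ENNReal.pow_ne_top hf)).1 hm

theorem sq_toOuterMeasure_bind_le (p : PMF α) (μ : α → PMF β) (ν : α → PMF γ) (s : Set β)
    (t : Set γ) (c₁ c₂ : ℝ≥0∞)
    (h : ∀ a, (μ a).toOuterMeasure s ^ 2 ≤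
      c₁ * (ν a).toOuterMeasure t + c₂ * (μ a).toOuterMeasure s) :
    (p.bind μ).toOuterMeasure s ^ 2 ≤
      c₁ * (p.bind ν).toOuterMeasure t + c₂ * (p.bind μ).toOuterMeasure s := by
  have hfin := ne_top_of_le_ne_top ENNReal.one_ne_top ((p.bind μ).toOuterMeasure_apply_le_one s)
  rw [toOuterMeasure_bind_apply] at hfin ⊢
  rw [toOuterMeasure_bind_apply]
  calc _ ≤ ∑' a, p a * (μ a).toOuterMeasure s ^ 2 := sq_tsum_mul_le_tsum_mul_sq p _ hfin
    _ ≤ ∑' a, p a * (c₁ * (ν a).toOuterMeasure t + c₂ * (μ a).toOuterMeasure s) :=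
        ENNReal.tsum_le_tsum fun a => mul_le_mul_right (h a) _
    _ = _ := by simp only [mul_add, ENNReal.tsum_add, mul_left_comm (p _), ENNReal.tsum_mul_left]

theorem toOuterMeasure_uniformOfFintype_map_apply [Fintype α] [Nonempty α] (F : α → β)
    (s : Set β) [DecidablePred (· ∈ s)] :
    ((uniformOfFintype α).map F).toOuterMeasure s = (#{x | F x ∈ s} : ℝ≥0∞) / Fintype.card α := by
  classical
  rw [toOuterMeasure_map_apply, toOuterMeasure_uniformOfFintype_apply, Fintype.card_subtype]
  congr

theorem toOuterMeasure_uniformOfFintype_bind_map_apply [Fintype α] [Nonempty α] [Fintype β]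
    [Nonempty β] (F : α → β → γ) (s : Set γ) [DecidablePred (· ∈ s)] :
    ((uniformOfFintype α).bind fun a => (uniformOfFintype β).map (F a)).toOuterMeasure s =
      (#{p : α × β | F p.1 p.2 ∈ s} : ℝ≥0∞) / (Fintype.card α * Fintype.card β) := by
  have hpairs : #{p : α × β | F p.1 p.2 ∈ s} = ∑ a, #{b | F a b ∈ s} := by
    simp only [card_filter, Fintype.sum_prod_type]
  rw [toOuterMeasure_bind_apply, tsum_fintype, hpairs, Nat.cast_sum, ENNReal.div_eq_inv_mul,
    ENNReal.mul_inv (by simp) (by simp), mul_assoc, Finset.mul_sum, Finset.mul_sum]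
  refine sum_congr rfl fun a _ => ?_
  rw [uniformOfFintype_apply, toOuterMeasure_uniformOfFintype_map_apply, ENNReal.div_eq_inv_mul]

end PMF

namespace Finset

variable {α U V : Type*} [Fintype α] [Fintype U] [Fintype V]

theorem sq_card_filter_le_card_filter_splice (e : α ≃ U × V) (P : α → Prop) [DecidablePred P] :
    #{x | P x} ^ 2 ≤ #{p : α × α | P p.1 ∧ P (e.symm ((e p.1).1, (e p.2).2))} := by
  set f : U → V → ℕ := fun u v => if P (e.symm (u, v)) then 1 else 0
  have hsingle : #{x | P x} = ∑ u, ∑ v, f u v := by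
    rw [card_filter, ← e.symm.sum_comp (fun x => if P x then 1 else 0), Fintype.sum_prod_type]
  have hpairs : #{p : α × α | P p.1 ∧ P (e.symm ((e p.1).1, (e p.2).2))} =
      ∑ u, Fintype.card U * (∑ v, f u v) ^ 2 := by
    rw [card_filter, ← (e.prodCongr e).symm.sum_comp]
    simp only [Fintype.sum_prod_type, Equiv.prodCongr_symm, Equiv.prodCongr_apply, Prod.map,
      Equiv.apply_symm_apply]
    refine sum_congr rfl fun u _ => ?_
    calc _ = ∑ v, ∑ _u' : U, ∑ v', f u v * f u v' := by
          refine sum_congr rfl fun v _ => sum_congr rfl fun _ _ => sum_congr rfl fun v' _ => ?_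
          simp only [f]
          split_ifs <;> simp_all
      _ = ∑ v, Fintype.card U * ∑ v', f u v * f u v' := by
          simp only [sum_const, card_univ, smul_eq_mul]
      _ = Fintype.card U * (∑ v, f u v) ^ 2 := by rw [sq, sum_mul_sum, mul_sum]
  rw [hsingle, hpairs, ← mul_sum]
  simpa using sq_sum_le_card_mul_sum_sq (s := univ) (f := fun u => ∑ v, f u v)

theorem card_filter_and_eval_eq_mul_card {ι H : Type*} [Fintype ι] [DecidableEq ι] [Fintype H]
    [DecidableEq H] (P : (ι → H) → Prop) [DecidablePred P] (i : ι) :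
    #{p : (ι → H) × (ι → H) | P p.1 ∧ p.1 i = p.2 i} * Fintype.card H =
      #{x | P x} * Fintype.card (ι → H) := by
  have hslice : ∀ c : H, #{y : ι → H | y i = c} * Fintype.card H = Fintype.card (ι → H) := by
    intro c
    have hc := Fintype.card_filter_piFinset_const (univ : Finset H) i c
    rw [Fintype.piFinset_univ, if_pos (mem_univ c), card_univ] at hc
    rw [hc, Fintype.card_fun, ← pow_succ, Nat.sub_add_cancel (Fintype.card_pos_iff.2 ⟨i⟩)]
  calc _ = (∑ x ∈ {x | P x}, #{y : ι → H | x i = y i}) * Fintype.card H := by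
        simp only [card_filter, Fintype.sum_prod_type, ite_and, sum_ite_irrel, sum_const_zero,
          sum_filter]
    _ = ∑ _x ∈ {x | P x}, Fintype.card (ι → H) := by
        rw [sum_mul]
        exact sum_congr rfl fun x _ => by simpa only [eq_comm] using hslice (x i)
    _ = _ := by rw [sum_const, smul_eq_mul]

theorem card_filter_exists_some_eq_sum {β ι : Type*} [Fintype β] [Fintype ι] [DecidableEq ι]
    (g : β → Option ι) (R : β → ι → Prop) [∀ x i, Decidable (R x i)]
    [DecidablePred fun x => ∃ i, g x = some i ∧ R x i] :
    #{x | ∃ i, g x = some i ∧ R x i} = ∑ i, #{x | g x = some i ∧ R x i} := by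
  simp only [card_filter]
  rw [sum_comm]
  refine sum_congr rfl fun x _ => ?_
  split_ifs with h
  · obtain ⟨i, hi, hR⟩ := h
    rw [sum_eq_single i (fun j _ hji => if_neg fun hj => hji (Option.some_injective _
      (hj.1.symm.trans hi))) (by simp), if_pos ⟨hi, hR⟩]
  · exact (sum_eq_zero fun i _ => if_neg fun hi => h ⟨i, hi⟩).symm

end Finset

namespace Forking

variable {H : Type*} {q : ℕ}

def glue (i : Fin q) (hs hs' : Fin q → H) : Fin q → H :=
  fun j => if j < i then hs j else hs' j

theorem glue_eq_piEquivPiSubtypeProd_symm (i : Fin q) (hs hs' : Fin q → H) :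
    glue i hs hs' = (Equiv.piEquivPiSubtypeProd (· < i) fun _ => H).symm
      (((Equiv.piEquivPiSubtypeProd (· < i) fun _ => H) hs).1,
        ((Equiv.piEquivPiSubtypeProd (· < i) fun _ => H) hs').2) := by
  funext j
  simp [glue, dite_eq_ite]

variable [Fintype H] [DecidableEq H] (g : (Fin q → H) → Option (Fin q))

theorem sq_card_eq_some_mul_le (i : Fin q) :
    #{hs | g hs = some i} ^ 2 * Fintype.card H ≤
      #{p : (Fin q → H) × (Fin q → H) |
          g p.1 = some i ∧ g (glue i p.1 p.2) = some i ∧ p.1 i ≠ p.2 i} * Fintype.card H +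
        #{hs | g hs = some i} * Fintype.card (Fin q → H) := by
  have hreset := sq_card_filter_le_card_filter_splice
    (Equiv.piEquivPiSubtypeProd (· < i) fun _ => H) (fun hs => g hs = some i)
  simp only [← glue_eq_piEquivPiSubtypeProd_symm] at hreset
  have hsplit : #{p : (Fin q → H) × (Fin q → H) | g p.1 = some i ∧ g (glue i p.1 p.2) = some i} ≤
      #{p : (Fin q → H) × (Fin q → H) |
          g p.1 = some i ∧ g (glue i p.1 p.2) = some i ∧ p.1 i ≠ p.2 i} +
        #{p : (Fin q → H) × (Fin q → H) | g p.1 = some i ∧ p.1 i = p.2 i} := by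
    refine (card_le_card fun p hp => ?_).trans (card_union_le _ _)
    simp only [mem_union, mem_filter, mem_univ, true_and] at hp ⊢
    tauto
  have hbad := card_filter_and_eval_eq_mul_card (fun hs => g hs = some i) i
  calc _ ≤ _ := Nat.mul_le_mul_right _ (hreset.trans hsplit)
    _ = _ := by rw [add_mul, hbad]

theorem sq_card_ne_none_mul_le :
    #{hs | g hs ≠ none} ^ 2 * Fintype.card H ≤
      q * (#{p : (Fin q → H) × (Fin q → H) | ∃ i,
          g p.1 = some i ∧ g (glue i p.1 p.2) = some i ∧ p.1 i ≠ p.2 i} * Fintype.card H +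
        #{hs | g hs ≠ none} * Fintype.card (Fin q → H)) := by
  have haccept : #{hs | g hs ≠ none} = ∑ i, #{hs | g hs = some i} := by
    simpa [Option.ne_none_iff_exists'] using
      card_filter_exists_some_eq_sum g fun _ _ => True
  have hforks := card_filter_exists_some_eq_sum (fun p : (Fin q → H) × (Fin q → H) => g p.1)
    fun p i => g (glue i p.1 p.2) = some i ∧ p.1 i ≠ p.2 i
  rw [haccept, hforks, sum_mul, sum_mul, ← sum_add_distrib]
  calc (∑ i, #{hs | g hs = some i}) ^ 2 * Fintype.card H
      ≤ q * ∑ i, #{hs | g hs = some i} ^ 2 * Fintype.card H := by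
        have hcs := sq_sum_le_card_mul_sum_sq (s := univ) (f := fun i => #{hs | g hs = some i})
        rw [card_univ, Fintype.card_fin] at hcs
        rw [← sum_mul, ← mul_assoc]
        exact Nat.mul_le_mul_right _ hcs
    _ ≤ _ := Nat.mul_le_mul_left _ (sum_le_sum fun i _ => sq_card_eq_some_mul_le g i)

theorem sq_div_le_of_sq_mul_le {C G N h q : ℕ} (hN : N ≠ 0) (hh : h ≠ 0)
    (hle : C ^ 2 * h ≤ q * (G * h + C * N)) :
    ((C : ℝ≥0∞) / N) ^ 2 ≤ q * (G / (N * N)) + q / h * (C / N) := by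
  have hN0 : (N : ℝ≥0∞) ≠ 0 := by exact_mod_cast hN
  have hh0 : (h : ℝ≥0∞) ≠ 0 := by exact_mod_cast hh
  have hNN0 : (N : ℝ≥0∞) * N ≠ 0 := mul_ne_zero hN0 hN0
  set a := (C : ℝ≥0∞) / N
  set f := (G : ℝ≥0∞) / (N * N)
  have hC : (C : ℝ≥0∞) = a * N := (ENNReal.div_mul_cancel hN0 (by simp)).symm
  have hG : (G : ℝ≥0∞) = f * (N * N) :=
    (ENNReal.div_mul_cancel hNN0 (by simp [ENNReal.mul_eq_top])).symm
  have hq : (q : ℝ≥0∞) / h * h = q := ENNReal.div_mul_cancel hh0 (by simp)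
  have hcast : (C : ℝ≥0∞) ^ 2 * h ≤ q * (G * h + C * N) := by exact_mod_cast hle
  refine (ENNReal.mul_le_mul_iff_left (mul_ne_zero hNN0 hh0) (by simp [ENNReal.mul_eq_top])).1 ?_
  calc a ^ 2 * ((N : ℝ≥0∞) * N * h) = (C : ℝ≥0∞) ^ 2 * h := by rw [hC]; ring
    _ ≤ (q : ℝ≥0∞) * (G * h + C * N) := hcast
    _ = (q : ℝ≥0∞) * f * (N * N * h) + (q / h * h) * a * (N * N) := by rw [hq, hC, hG]; ring
    _ = (q * f + q / h * a) * (N * N * h) := by ring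

theorem forking_bounds_of_sq_le {a f q h : ℝ} (ha : 0 ≤ a) (hf : 0 ≤ f) (hq : 0 ≤ q)
    (hh : 0 ≤ h) (hkey : a ^ 2 ≤ q * f + q / h * a) :
    a * (a / q - 1 / h) ≤ f ∧ a ≤ q / h + √(q * f) := by
  have hqh : 0 ≤ q / h := div_nonneg hq hh
  constructor
  · rcases hq.eq_or_lt with rfl | hq
    · simp only [div_zero, zero_sub, mul_neg]
      have : 0 ≤ a * (1 / h) := by positivity
      linarith
    · have : a * (a / q - 1 / h) = (a ^ 2 - q / h * a) / q := by field_simp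
      rw [this, div_le_iff₀ hq]
      linarith
  · rcases le_or_gt a (q / h) with hle | hlt
    · linarith [Real.sqrt_nonneg (q * f)]
    · have hsq : (a - q / h) ^ 2 ≤ q * f := by nlinarith
      linarith [(Real.abs_le_sqrt hsq).trans' (le_abs_self _)]

end Forking

theorem stmt12_general {X R S : Type*} {H : Type*} [Fintype H] [Nonempty H]
    (q : ℕ)
    (A : X → R → (Fin q → H) → Option (Fin q) × S)
    (xgen : PMF X) (rgen : PMF R)
    (acc frk : ℝ≥0∞)
    (hacc : acc = (xgen.bind fun x => rgen.bind fun ρ =>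
        (PMF.uniformOfFintype (Fin q → H)).map fun hs => A x ρ hs).toOuterMeasure
          {out : Option (Fin q) × S | out.1 ≠ none})
    (hfrk : frk = (xgen.bind fun x => rgen.bind fun ρ =>
        (PMF.uniformOfFintype (Fin q → H)).bind fun hs =>
          (PMF.uniformOfFintype (Fin q → H)).map fun hs' =>
            (x, ρ, hs, hs')).toOuterMeasure
          {t : X × R × (Fin q → H) × (Fin q → H) | ∃ i : Fin q,
            (A t.1 t.2.1 t.2.2.1).1 = some i ∧
            (A t.1 t.2.1 (fun j => if j < i then t.2.2.1 j else t.2.2.2 j)).1 = some i ∧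
            t.2.2.1 i ≠ t.2.2.2 i}) :
    acc.toReal * (acc.toReal / q - 1 / (Fintype.card H : ℝ)) ≤ frk.toReal ∧
      acc.toReal ≤ q / (Fintype.card H : ℝ) + Real.sqrt (q * frk.toReal) := by
  classical
  have hENN : acc ^ 2 ≤ q * frk + q / Fintype.card H * acc := by
    rw [hacc, hfrk]
    refine PMF.sq_toOuterMeasure_bind_le _ _ _ _ _ _ _ fun x => ?_
    refine PMF.sq_toOuterMeasure_bind_le _ _ _ _ _ _ _ fun ρ => ?_
    rw [PMF.toOuterMeasure_uniformOfFintype_map_apply,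
      PMF.toOuterMeasure_uniformOfFintype_bind_map_apply]
    exact Forking.sq_div_le_of_sq_mul_le Fintype.card_ne_zero Fintype.card_ne_zero
      (Forking.sq_card_ne_none_mul_le fun hs => (A x ρ hs).1)
  have hacc_ne_top : acc ≠ ∞ := ne_top_of_le_ne_top ENNReal.one_ne_top
    (hacc ▸ PMF.toOuterMeasure_apply_le_one _ _)
  have hfrk_ne_top : frk ≠ ∞ := ne_top_of_le_ne_top ENNReal.one_ne_top
    (hfrk ▸ PMF.toOuterMeasure_apply_le_one _ _)
  have hreal : acc.toReal ^ 2 ≤ q * frk.toReal + q / Fintype.card H * acc.toReal := by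
    have := ENNReal.toReal_mono
      (by simp [ENNReal.mul_eq_top, ENNReal.div_eq_top, hacc_ne_top, hfrk_ne_top]) hENN
    simpa [ENNReal.toReal_add, ENNReal.toReal_mul, ENNReal.toReal_div, ENNReal.mul_eq_top,
      ENNReal.div_eq_top, hacc_ne_top, hfrk_ne_top] using this
  exact Forking.forking_bounds_of_sq_le ENNReal.toReal_nonneg ENNReal.toReal_nonneg q.cast_nonneg
    (Nat.cast_nonneg _) hreal

/-- general forking lemma: `A` takes an input `x`, coins `ρ`, and `q`
uniform values `h₁,…,h_q ∈ H` (|H| = h ≥ 2), and outputs `(J, σ)` with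
`J ∈ {0,…,q}` (modelled as `Option (Fin q)`, `none` for 0).  Let `acc = Pr[J ≥ 1]`.
The forking algorithm reruns `A` with the same input, coins, and `h₁,…,h_{I−1}`, but
fresh `h'_I,…,h'_q`, succeeding if the same index `I ≥ 1` is output twice and
`h_I ≠ h'_I`; `frk` is its success probability.  Then `frk ≥ acc·(acc/q − 1/h)`,
equivalently `acc ≤ q/h + √(q·frk)`. -/
theorem stmt12 {X R S : Type*} {H : Type*} [Fintype H] [DecidableEq H] [Nonempty H]
    (hH : 2 ≤ Fintype.card H)
    (q : ℕ) (hq : 1 ≤ q)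
    (A : X → R → (Fin q → H) → Option (Fin q) × S)
    (xgen : PMF X) (rgen : PMF R)
    (acc frk : ℝ≥0∞)
    (hacc : acc = (xgen.bind fun x => rgen.bind fun ρ =>
        (PMF.uniformOfFintype (Fin q → H)).map fun hs => A x ρ hs).toOuterMeasure
          {out : Option (Fin q) × S | out.1 ≠ none})
    (hfrk : frk = (xgen.bind fun x => rgen.bind fun ρ =>
        (PMF.uniformOfFintype (Fin q → H)).bind fun hs =>
          (PMF.uniformOfFintype (Fin q → H)).map fun hs' =>
            (x, ρ, hs, hs')).toOuterMeasure
          {t : X × R × (Fin q → H) × (Fin q → H) | ∃ i : Fin q,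
            (A t.1 t.2.1 t.2.2.1).1 = some i ∧
            (A t.1 t.2.1 (fun j => if j < i then t.2.2.1 j else t.2.2.2 j)).1 = some i ∧
            t.2.2.1 i ≠ t.2.2.2 i}) :
    acc.toReal * (acc.toReal / q - 1 / (Fintype.card H : ℝ)) ≤ frk.toReal ∧
      acc.toReal ≤ q / (Fintype.card H : ℝ) + Real.sqrt (q * frk.toReal) :=
  stmt12_general q A xgen rgen acc frk hacc hfrk
end

section
/- Define the rejection sampling ratio: for z, v ∈ Z^{ld} with ‖v‖ ≤ T, σ = 11T, and assuming |⟨z, v⟩| ≤ 12σ‖v‖, the ratio of discrete Gaussian densities satisfies D_σ^{ld}(z) / D_{v,σ}^{ld}(z) = exp((−2⟨z,v⟩ + ‖v‖²)/(2σ²)) ≤ exp((24σ‖v‖ + ‖v‖²)/(2σ²)) ≤ exp(24/22 + 1/242) < 3. -/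
lemma exp_small_le : Real.exp ((23:ℝ)/242) ≤ 1 + 23/242 + (23/242)^2/2 + (23/242)^3*(2/9) := by
  have hb := Real.exp_bound (x := (23:ℝ)/242) (by rw [abs_of_nonneg] <;> norm_num) (n := 3) (by norm_num)
  have h1 : ∑ i ∈ Finset.range 3, ((23:ℝ)/242) ^ i / (Nat.factorial i : ℝ) = 1 + 23/242 + (23/242)^2/2 := by
    simp [Finset.sum_range_succ]
  have hx : |(23:ℝ)/242| = 23/242 := abs_of_nonneg (by norm_num)
  rw [h1, hx] at hb
  have h3 := abs_sub_le_iff.mp hb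
  have h2 : ((3:ℕ).succ : ℝ) / (Nat.factorial 3 * 3) = 2/9 := by norm_num [Nat.factorial]
  nlinarith [h3.1]

lemma exp_lt3 : Real.exp ((24:ℝ) / 22 + 1 / 242) < 3 := by
  have h : (24:ℝ)/22 + 1/242 = 1 + 23/242 := by norm_num
  rw [h, Real.exp_add]
  have he : Real.exp 1 < 2.7182818286 := Real.exp_one_lt_d9
  have hs := exp_small_le
  have hp : 0 < Real.exp ((23:ℝ)/242) := Real.exp_pos _
  nlinarith


/-- rejection sampling ratio: for `z, v ∈ ℤ^{ld} ⊆ ℝ^{ld}` with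
`‖v‖ ≤ T`, `σ = 11T`, and `|⟨z,v⟩| ≤ 12σ‖v‖`, the ratio of the (commonly normalized)
discrete Gaussian densities satisfies
`D_σ(z)/D_{v,σ}(z) = exp((−2⟨z,v⟩ + ‖v‖²)/(2σ²)) ≤ exp((24σ‖v‖ + ‖v‖²)/(2σ²))
  ≤ exp(24/22 + 1/242) < 3`. -/
theorem stmt15 (n : ℕ) (z v : Fin n → ℤ) (T σ : ℝ) (hT : 0 < T)
    (hv : Real.sqrt (∑ i, ((v i : ℝ)) ^ 2) ≤ T) (hσ : σ = 11 * T)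
    (hip : |∑ i, (z i : ℝ) * (v i : ℝ)| ≤ 12 * σ * Real.sqrt (∑ i, ((v i : ℝ)) ^ 2))
    (N : ℝ) (hN : 0 < N) :
    (Real.exp (-(∑ i, ((z i : ℝ)) ^ 2) / (2 * σ ^ 2)) / N) /
        (Real.exp (-(∑ i, ((z i : ℝ) - (v i : ℝ)) ^ 2) / (2 * σ ^ 2)) / N) =
      Real.exp ((-2 * (∑ i, (z i : ℝ) * (v i : ℝ)) + ∑ i, ((v i : ℝ)) ^ 2) /
        (2 * σ ^ 2)) ∧
    Real.exp ((-2 * (∑ i, (z i : ℝ) * (v i : ℝ)) + ∑ i, ((v i : ℝ)) ^ 2) /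
        (2 * σ ^ 2)) ≤
      Real.exp ((24 * σ * Real.sqrt (∑ i, ((v i : ℝ)) ^ 2) + ∑ i, ((v i : ℝ)) ^ 2) /
        (2 * σ ^ 2)) ∧
    Real.exp ((24 * σ * Real.sqrt (∑ i, ((v i : ℝ)) ^ 2) + ∑ i, ((v i : ℝ)) ^ 2) /
        (2 * σ ^ 2)) ≤ Real.exp (24 / 22 + 1 / 242) ∧
    Real.exp (24 / 22 + 1 / 242) < 3 := by
  have hσ0 : 0 < σ := by rw [hσ]; linarith
  have hσ2 : 0 < 2 * σ ^ 2 := by positivity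
  set S := Real.sqrt (∑ i, ((v i : ℝ)) ^ 2) with hS
  have hS0 : 0 ≤ S := Real.sqrt_nonneg _
  have hSv : S ^ 2 = ∑ i, ((v i : ℝ)) ^ 2 :=
    Real.sq_sqrt (Finset.sum_nonneg fun i _ => sq_nonneg _)
  have hexpand : ∑ i, ((z i : ℝ) - (v i : ℝ)) ^ 2
      = ∑ i, ((z i : ℝ)) ^ 2 - 2 * (∑ i, (z i : ℝ) * (v i : ℝ)) + ∑ i, ((v i : ℝ)) ^ 2 := by
    have h : ∀ i : Fin n, ((z i : ℝ) - (v i : ℝ)) ^ 2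
        = (z i : ℝ) ^ 2 - 2 * ((z i : ℝ) * (v i : ℝ)) + (v i : ℝ) ^ 2 := fun i => by ring
    simp only [h, Finset.sum_add_distrib, Finset.sum_sub_distrib, Finset.mul_sum]
  refine ⟨?_, ?_, ?_, exp_lt3⟩
  · rw [div_div_div_comm, div_self hN.ne', div_one, ← Real.exp_sub, ← sub_div, hexpand]
    congr 1
    ring
  · apply Real.exp_le_exp.mpr
    gcongr (?_ + _) / _
    have := abs_le.mp hip
    linarith [this.1, this.2]
  · apply Real.exp_le_exp.mpr
    rw [div_le_iff₀ hσ2, ← hSv, hσ]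
    nlinarith [mul_le_mul hv hv hS0 hT.le]
end

section
/- (Binding of BDLOP from MSIS) Suppose there exist two weak openings of the same BDLOP commitment: invertible c̄₁, c̄₂ ∈ R_q with ‖c̄₁ r₁‖ ≤ 2β, ‖c̄₂ r₂‖ ≤ 2β, A·r₁ = A·r₂ = com₀, bᵀr₁ + m₁ = bᵀr₂ + m₂ = com₁, with m₁ ≠ m₂, where ‖c̄_i‖₁ ≤ 2ω. Then r₁ ≠ r₂ and the vector c̄₁c̄₂(r₁ − r₂) is a nonzero solution to A·x = 0 with ‖c̄₁c̄₂(r₁ − r₂)‖ ≤ 8ωβ, i.e. a solution to MSIS with bound 8ωβ. -/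
set_option maxHeartbeats 1000000


open Polynomial

/-- The ring `R_q = Z_q[X]/(X^d + 1)`. -/
noncomputable abbrev Rq (q d : ℕ) : Type :=
  Polynomial (ZMod q) ⧸ Ideal.span {(X : Polynomial (ZMod q)) ^ d + 1}

/-- binding of BDLOP from MSIS: given two weak openings
`(c̄₁, r₁, m₁)`, `(c̄₂, r₂, m₂)` of the same BDLOP commitment `(com₀, com₁)` with
`m₁ ≠ m₂`, `‖c̄ᵢrᵢ‖ ≤ 2β`, `‖c̄ᵢ‖₁ ≤ 2ω`, and `c̄₁, c̄₂` invertible, we get `r₁ ≠ r₂`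
and `c̄₁c̄₂(r₁ − r₂)` is a nonzero solution to `A·x = 0` of norm at most `8ωβ`,
i.e. an MSIS solution with bound `8ωβ`.  (Here `‖·‖` on `R_q^n` and the `ℓ₁`-norm on
`R_q` are abstracted, assuming the triangle inequality, symmetry under negation, and
the submultiplicative bound `‖c·a‖ ≤ ‖c‖₁·‖a‖`.) -/
theorem stmt19 (q d : ℕ) [Fact (Nat.Prime q)] (κ n : ℕ)
    (A : Matrix (Fin κ) (Fin n) (Rq q d)) (b : Fin n → Rq q d)
    (nrm : (Fin n → Rq q d) → ℝ) (l1 : Rq q d → ℝ)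
    (hnrm_add : ∀ x y, nrm (x + y) ≤ nrm x + nrm y)
    (hnrm_neg : ∀ x, nrm (-x) = nrm x)
    (hnrm_smul : ∀ (c : Rq q d) (x : Fin n → Rq q d), nrm (c • x) ≤ l1 c * nrm x)
    (hl1_nonneg : ∀ c, 0 ≤ l1 c) (hnrm_nonneg : ∀ x, 0 ≤ nrm x)
    (ω β : ℝ) (hω : 0 ≤ ω) (hβ : 0 ≤ β)
    (c₁ c₂ : Rq q d) (hc₁ : IsUnit c₁) (hc₂ : IsUnit c₂)
    (hl1c₁ : l1 c₁ ≤ 2 * ω) (hl1c₂ : l1 c₂ ≤ 2 * ω)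
    (r₁ r₂ : Fin n → Rq q d) (m₁ m₂ : Rq q d) (hm : m₁ ≠ m₂)
    (hb₁ : nrm (c₁ • r₁) ≤ 2 * β) (hb₂ : nrm (c₂ • r₂) ≤ 2 * β)
    (com₀ : Fin κ → Rq q d) (com₁ : Rq q d)
    (hA₁ : A.mulVec r₁ = com₀) (hA₂ : A.mulVec r₂ = com₀)
    (hB₁ : (∑ j, b j * r₁ j) + m₁ = com₁) (hB₂ : (∑ j, b j * r₂ j) + m₂ = com₁) :
    r₁ ≠ r₂ ∧
    (c₁ * c₂) • (r₁ - r₂) ≠ 0 ∧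
    A.mulVec ((c₁ * c₂) • (r₁ - r₂)) = 0 ∧
    nrm ((c₁ * c₂) • (r₁ - r₂)) ≤ 8 * ω * β := by
  have hr : r₁ ≠ r₂ := by
    intro h
    apply hm
    have := hB₁.trans hB₂.symm
    rw [h] at this
    exact add_left_cancel this
  have hsub : r₁ - r₂ ≠ 0 := sub_ne_zero.mpr hr
  have hcu : IsUnit (c₁ * c₂) := hc₁.mul hc₂
  refine ⟨hr, ?_, ?_, ?_⟩
  · intro h
    apply hsub
    funext i
    have h' := congrFun h i
    simp only [Pi.smul_apply, smul_eq_mul, Pi.zero_apply] at h' ⊢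
    exact hcu.mul_right_eq_zero.mp h'
  · have hsum : ∀ i, ∑ j, A i j * r₁ j = ∑ j, A i j * r₂ j := fun i =>
      congrFun (hA₁.trans hA₂.symm) i
    funext i
    simp only [Matrix.mulVec, dotProduct, Pi.smul_apply, Pi.sub_apply,
      smul_eq_mul, Pi.zero_apply]
    have e : ∀ j ∈ Finset.univ, A i j * ((c₁ * c₂) * (r₁ j - r₂ j)) =
        (c₁ * c₂) * (A i j * r₁ j) - (c₁ * c₂) * (A i j * r₂ j) := fun j _ => by ring
    rw [Finset.sum_congr rfl e, Finset.sum_sub_distrib, ← Finset.mul_sum,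
      ← Finset.mul_sum, hsum i, sub_self]
  · have key : (c₁ * c₂) • (r₁ - r₂) = c₂ • (c₁ • r₁) + -(c₁ • (c₂ • r₂)) := by
      funext i
      simp only [Pi.add_apply, Pi.neg_apply, Pi.smul_apply, Pi.sub_apply, smul_eq_mul]
      ring
    rw [key]
    calc nrm (c₂ • (c₁ • r₁) + -(c₁ • (c₂ • r₂)))
        ≤ nrm (c₂ • (c₁ • r₁)) + nrm (-(c₁ • (c₂ • r₂))) := hnrm_add _ _
      _ = nrm (c₂ • (c₁ • r₁)) + nrm (c₁ • (c₂ • r₂)) := by rw [hnrm_neg]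
      _ ≤ l1 c₂ * nrm (c₁ • r₁) + l1 c₁ * nrm (c₂ • r₂) := by
          exact add_le_add (hnrm_smul _ _) (hnrm_smul _ _)
      _ ≤ (2 * ω) * (2 * β) + (2 * ω) * (2 * β) := by
          apply add_le_add <;>
            exact mul_le_mul (by assumption) (by assumption) (hnrm_nonneg _)
              (by linarith)
      _ = 8 * ω * β := by ring
end
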